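/- arXiv:1312.4846 — 3 statements merged into one kernel-verified Lean document; each statement's English description precedes it below -/
import Mathlib

section
/- Under the hypotheses of the strict A-coupled-expanding setup with expanding similarity ratios λᵢ > 1 on each Vᵢ, for every admissible word (a₀,…,aₙ) with respect to Σₘ⁺(A) define Δ_{a₀…aₙ} = ⋂_{j=0}^{n} f^{-j}(V_{aⱼ}). Then diam(Δ_{a₀…aₙ}) ≤ (min_i λᵢ)^{-n} · diam(D); in particular the maximum over admissible words of length n+1 of diam(Δ_{a₀…aₙ}) tends to 0 as n → ∞. -/
/-!
On each `V i` the map `f` stretches distances by `λᵢ ≥ L := minᵢ λᵢ`. Two points of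
`Δ_{a₀…aₙ}` have their first `n` iterates in the same pieces `V (a j)`, so the distance of
their `n`-th iterates is at least `Lⁿ` times their own distance; but these iterates lie in
`V (a n) ⊆ D`, so that distance is at most `diam D`. Since `L > 1`, the bound `L⁻ⁿ diam D`
tends to `0`.
-/

open Set Filter Topology

section Expanding

variable {X ι : Type*} [PseudoMetricSpace X] {f : X → X} {V : ι → Set X} {L : ℝ}

lemma pow_mul_dist_le_dist_iterate (hL : 0 ≤ L)
    (hexp : ∀ i, ∀ x ∈ V i, ∀ y ∈ V i, L * dist x y ≤ dist (f x) (f y))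
    (a : ℕ → ι) {n : ℕ} {x y : X}
    (hx : ∀ j < n, f^[j] x ∈ V (a j)) (hy : ∀ j < n, f^[j] y ∈ V (a j)) :
    L ^ n * dist x y ≤ dist (f^[n] x) (f^[n] y) := by
  induction n with
  | zero => simp
  | succ n ih =>
    have ih := ih (fun j hj => hx j (by omega)) (fun j hj => hy j (by omega))
    rw [Function.iterate_succ_apply', Function.iterate_succ_apply']
    calc L ^ (n + 1) * dist x y = L * (L ^ n * dist x y) := by ring
      _ ≤ L * dist (f^[n] x) (f^[n] y) := by gcongr
      _ ≤ dist (f (f^[n] x)) (f (f^[n] y)) :=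
        hexp (a n) _ (hx n n.lt_succ_self) _ (hy n n.lt_succ_self)

lemma diam_iInter_preimage_iterate_le {D : Set X} (hD : Bornology.IsBounded D)
    (hVD : ∀ i, V i ⊆ D) (hL : 0 < L)
    (hexp : ∀ i, ∀ x ∈ V i, ∀ y ∈ V i, L * dist x y ≤ dist (f x) (f y))
    (n : ℕ) (a : ℕ → ι) :
    Metric.diam (⋂ j ∈ Finset.range (n + 1), f^[j] ⁻¹' V (a j))
      ≤ L⁻¹ ^ n * Metric.diam D := by
  refine Metric.diam_le_of_forall_dist_le (by positivity) fun x hx y hy => ?_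
  simp only [mem_iInter, Finset.mem_range, mem_preimage] at hx hy
  have hstretch : L ^ n * dist x y ≤ dist (f^[n] x) (f^[n] y) :=
    pow_mul_dist_le_dist_iterate hL.le hexp a (fun j hj => hx j (by omega))
      (fun j hj => hy j (by omega))
  have hbound : dist (f^[n] x) (f^[n] y) ≤ Metric.diam D :=
    Metric.dist_le_diam_of_mem hD (hVD _ (hx n n.lt_succ_self)) (hVD _ (hy n n.lt_succ_self))
  rw [inv_pow, inv_mul_eq_div, le_div_iff₀' (by positivity)]
  exact hstretch.trans hbound

end Expanding

theorem stmt1_general {d m : ℕ} (hm : 2 ≤ m)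
    (D : Set (EuclideanSpace ℝ (Fin d)))
    (hDb : Bornology.IsBounded D)
    (A : Matrix (Fin m) (Fin m) ℕ)
    (V : Fin m → Set (EuclideanSpace ℝ (Fin d)))
    (hVD : ∀ i, V i ⊆ D)
    (f : EuclideanSpace ℝ (Fin d) → EuclideanSpace ℝ (Fin d))
    (lam : Fin m → ℝ) (hlam : ∀ i, 1 < lam i)
    (hexp : ∀ i, ∀ x ∈ V i, ∀ y ∈ V i, dist (f x) (f y) = lam i * dist x y) :
    (∀ (n : ℕ) (a : ℕ → Fin m), (∀ j < n, A (a j) (a (j + 1)) = 1) →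
        Metric.diam (⋂ j ∈ Finset.range (n + 1), (f^[j]) ⁻¹' (V (a j)))
          ≤ (sInf (Set.range lam))⁻¹ ^ n * Metric.diam D) ∧
      Tendsto
        (fun n : ℕ =>
          ⨆ a : {a : ℕ → Fin m // ∀ j < n, A (a j) (a (j + 1)) = 1},
            Metric.diam (⋂ j ∈ Finset.range (n + 1), (f^[j]) ⁻¹' (V (a.1 j))))
        atTop (𝓝 0) := by
  set L := sInf (Set.range lam)
  have : Nonempty (Fin m) := ⟨⟨0, by omega⟩⟩
  have hL1 : 1 < L :=
    ((finite_range lam).lt_csInf_iff (range_nonempty lam)).2 (forall_mem_range.2 hlam)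
  have hexp' : ∀ i, ∀ x ∈ V i, ∀ y ∈ V i, L * dist x y ≤ dist (f x) (f y) := by
    intro i x hx y hy
    rw [hexp i x hx y hy]
    gcongr
    exact csInf_le (finite_range lam).bddBelow (mem_range_self i)
  have hdiam n a := diam_iInter_preimage_iterate_le hDb hVD (by positivity) hexp' n a
  refine ⟨fun n a _ => hdiam n a,
    squeeze_zero (fun n => Real.iSup_nonneg fun _ => Metric.diam_nonneg)
      (fun n => Real.iSup_le (fun a => hdiam n a.1) (by positivity)) ?_⟩
  simpa using (tendsto_pow_atTop_nhds_zero_of_lt_one (by positivity)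
    (inv_lt_one_of_one_lt₀ hL1)).mul_const (Metric.diam D)

/-- diameter estimate for the basic sets of the Markov geometric
construction of a strictly A-coupled-expanding map, and the resulting
convergence to 0 of the maximal diameter of basic sets of length n+1. -/
theorem stmt1 {d m : ℕ} (hm : 2 ≤ m)
    (D : Set (EuclideanSpace ℝ (Fin d))) (hDcl : IsClosed D)
    (hDb : Bornology.IsBounded D)
    (A : Matrix (Fin m) (Fin m) ℕ)
    (V : Fin m → Set (EuclideanSpace ℝ (Fin d)))
    (hVc : ∀ i, IsCompact (V i)) (hVD : ∀ i, V i ⊆ D)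
    (hsep : ∀ i j, i ≠ j → ∃ ε > 0, ∀ x ∈ V i, ∀ y ∈ V j, ε ≤ dist x y)
    (f : EuclideanSpace ℝ (Fin d) → EuclideanSpace ℝ (Fin d))
    (hf : ContinuousOn f (⋃ i, V i))
    (hcover : ∀ i j, A i j = 1 → V j ⊆ f '' V i)
    (lam : Fin m → ℝ) (hlam : ∀ i, 1 < lam i)
    (hexp : ∀ i, ∀ x ∈ V i, ∀ y ∈ V i, dist (f x) (f y) = lam i * dist x y) :
    (∀ (n : ℕ) (a : ℕ → Fin m), (∀ j < n, A (a j) (a (j + 1)) = 1) →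
        Metric.diam (⋂ j ∈ Finset.range (n + 1), (f^[j]) ⁻¹' (V (a j)))
          ≤ (sInf (Set.range lam))⁻¹ ^ n * Metric.diam D) ∧
      Tendsto
        (fun n : ℕ =>
          ⨆ a : {a : ℕ → Fin m // ∀ j < n, A (a j) (a (j + 1)) = 1},
            Metric.diam (⋂ j ∈ Finset.range (n + 1), (f^[j]) ⁻¹' (V (a.1 j))))
        atTop (𝓝 0) :=
  stmt1_general hm D hDb A V hVD f lam hlam hexp
end

section
/- Under the hypotheses of the strict A-coupled-expanding setup with expanding similarity ratios λᵢ > 1 on each compact piece Vᵢ (A irreducible with some row summing to at least 2), the invariant Cantor set V on which f is conjugate to σ_A equals the limit set of the Markov geometric construction: V = ⋂_{n=0}^∞ ⋃_{(a₀…aₙ) admissible} Δ_{a₀…aₙ}, where Δ_{a₀…aₙ} = ⋂_{j=0}^n f^{-j}(V_{aⱼ}). -/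
open Set Function

/-! Since the pieces `Vᵢ` are pairwise disjoint, a point of the limit set determines its
itinerary: the `n`-th symbol of any admissible word of length `> n` whose cylinder contains `x`
is the unique `i` with `fⁿ x ∈ Vᵢ`. Reading off these symbols gives one infinite admissible
itinerary of `x`. -/

lemma iUnion_iInter_eq_iInter_iUnion_biInter_of_pairwise_disjoint {X ι : Type*}
    (W : ℕ → ι → Set X) (hW : ∀ n, Pairwise (Disjoint on W n)) (R : ι → ι → Prop) :
    (⋃ α : {α : ℕ → ι // ∀ n, R (α n) (α (n + 1))}, ⋂ n, W n (α.1 n))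
      = ⋂ n, ⋃ a : {a : ℕ → ι // ∀ j < n, R (a j) (a (j + 1))},
          ⋂ j ∈ Finset.range (n + 1), W j (a.1 j) := by
  ext x
  simp only [mem_iUnion, mem_iInter, Finset.mem_range]
  constructor
  · rintro ⟨⟨α, hα⟩, hx⟩ n
    exact ⟨⟨α, fun j _ => hα j⟩, fun j _ => hx j⟩
  · intro hx
    choose a ha using hx
    have symbol_eq {n k : ℕ} (hn : n < k + 1) : (a k).1 n = (a n).1 n :=
      (hW n).eq (not_disjoint_iff.2 ⟨x, ha k n hn, ha n n n.lt_succ_self⟩)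
    refine ⟨⟨fun n => (a n).1 n, fun n => ?_⟩, fun n => ha n n n.lt_succ_self⟩
    dsimp only
    rw [← symbol_eq (k := n + 1) (by omega), ← symbol_eq (n + 1).lt_succ_self]
    exact (a (n + 1)).2 n n.lt_succ_self

lemma pairwise_disjoint_of_forall_le_dist {X ι : Type*} [PseudoMetricSpace X] {V : ι → Set X}
    (hsep : ∀ i j, i ≠ j → ∃ ε > 0, ∀ x ∈ V i, ∀ y ∈ V j, ε ≤ dist x y) :
    Pairwise (Disjoint on V) := by
  intro i j hij
  obtain ⟨ε, hε, hle⟩ := hsep i j hij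
  refine Set.disjoint_left.2 fun x hxi hxj => ?_
  have := hle x hxi x hxj
  rw [dist_self] at this
  linarith

theorem stmt3_general {d m : ℕ}
    (A : Matrix (Fin m) (Fin m) ℕ)
    (V : Fin m → Set (EuclideanSpace ℝ (Fin d)))
    (hsep : ∀ i j, i ≠ j → ∃ ε > 0, ∀ x ∈ V i, ∀ y ∈ V j, ε ≤ dist x y)
    (f : EuclideanSpace ℝ (Fin d) → EuclideanSpace ℝ (Fin d)) :
    (⋃ α : {α : ℕ → Fin m // ∀ n, A (α n) (α (n + 1)) = 1},
        ⋂ n : ℕ, (f^[n]) ⁻¹' (V (α.1 n)))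
      = ⋂ n : ℕ, ⋃ a : {a : ℕ → Fin m // ∀ j < n, A (a j) (a (j + 1)) = 1},
          ⋂ j ∈ Finset.range (n + 1), (f^[j]) ⁻¹' (V (a.1 j)) :=
  iUnion_iInter_eq_iInter_iUnion_biInter_of_pairwise_disjoint (fun n i => f^[n] ⁻¹' V i)
    (fun _ => (pairwise_disjoint_of_forall_le_dist hsep).mono fun _ _ h => h.preimage _)
    (fun i j => A i j = 1)

/-- the invariant Cantor set V = ⋃_{α ∈ Σₘ⁺(A)} ⋂ₙ f^{-n}(V_{αₙ})
of a strictly A-coupled-expanding map equals the limit set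
⋂ₙ ⋃_{(a₀…aₙ) admissible} Δ_{a₀…aₙ} of the Markov geometric construction. -/
theorem stmt3 {d m : ℕ} (hm : 2 ≤ m)
    (D : Set (EuclideanSpace ℝ (Fin d))) (hDcl : IsClosed D)
    (hDb : Bornology.IsBounded D)
    (A : Matrix (Fin m) (Fin m) ℕ)
    (hA01 : ∀ i j, A i j = 0 ∨ A i j = 1)
    (hirr : ∀ i j, ∃ k : ℕ, 0 < (A ^ k) i j)
    (hrow : ∃ i₀, 2 ≤ ∑ j, A i₀ j)
    (V : Fin m → Set (EuclideanSpace ℝ (Fin d)))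
    (hVc : ∀ i, IsCompact (V i)) (hVD : ∀ i, V i ⊆ D)
    (hsep : ∀ i j, i ≠ j → ∃ ε > 0, ∀ x ∈ V i, ∀ y ∈ V j, ε ≤ dist x y)
    (f : EuclideanSpace ℝ (Fin d) → EuclideanSpace ℝ (Fin d))
    (hf : ContinuousOn f (⋃ i, V i))
    (hcover : ∀ i j, A i j = 1 → V j ⊆ f '' V i)
    (lam : Fin m → ℝ) (hlam : ∀ i, 1 < lam i)
    (hexp : ∀ i, ∀ x ∈ V i, ∀ y ∈ V i, dist (f x) (f y) = lam i * dist x y) :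
    (⋃ α : {α : ℕ → Fin m // ∀ n, A (α n) (α (n + 1)) = 1},
        ⋂ n : ℕ, (f^[n]) ⁻¹' (V (α.1 n)))
      = ⋂ n : ℕ, ⋃ a : {a : ℕ → Fin m // ∀ j < n, A (a j) (a (j + 1)) = 1},
          ⋂ j ∈ Finset.range (n + 1), (f^[j]) ⁻¹' (V (a.1 j)) :=
  stmt3_general A V hsep f
end

section
/- Let f : D → ℝⁿ (D ⊆ ℝⁿ closed and bounded) be strictly coupled-expanding in m pairwise disjoint compact sets V₁,…,Vₘ (i.e., f(Vᵢ) ⊇ ⋃ⱼ Vⱼ for all i, and d(Vᵢ,Vⱼ) > 0 for i ≠ j), continuous on ⋃ᵢVᵢ, with d(f(x),f(y)) = λᵢ d(x,y) for x,y ∈ Vᵢ where λᵢ > 1. Then the invariant set V = ⋃_{α ∈ Σₘ⁺} ⋂_{n≥0} f^{-n}(V_{αₙ}) is a self-similar set for the contractions Sᵢ = (f|_{Vᵢ})^{-1} restricted to V, i.e., V = ⋃_{i=1}^m Sᵢ(V) where Sᵢ is a similarity with ratio 1/λᵢ, and the sets Sᵢ(V) are pairwise disjoint. -/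
/-!
Expanding by the factor `λᵢ` on `Vᵢ`, `f` is injective there, and `f(Vᵢ)` covers every `Vⱼ`,
so `Sᵢ = (f|_{Vᵢ})⁻¹` is defined on `⋃ⱼ Vⱼ` and contracts distances by exactly `1/λᵢ`.
Shifting itineraries shows `V = ⋃ᵢ (Vᵢ ∩ f⁻¹(V))`, and `Sᵢ(V)` is precisely
`Vᵢ ∩ f⁻¹(V)`; these pieces lie in the pairwise separated sets `Vᵢ`, hence are disjoint.
-/

open Set Function

section Branch

variable {X : Type*} {f : X → X} {s t : Set X} {c : ℝ}

theorem Set.InjOn.of_dist_eq_mul [MetricSpace X] (hc : c ≠ 0)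
    (hf : ∀ x ∈ s, ∀ y ∈ s, dist (f x) (f y) = c * dist x y) : InjOn f s := by
  intro x hx y hy hxy
  have h := hf x hx y hy
  rw [hxy, dist_self, eq_comm, mul_eq_zero] at h
  exact dist_eq_zero.mp (h.resolve_left hc)

theorem Set.SurjOn.dist_invFunOn_eq_inv_mul [PseudoMetricSpace X] [Nonempty X]
    (hst : SurjOn f s t) (hc : c ≠ 0) (hf : ∀ x ∈ s, ∀ y ∈ s, dist (f x) (f y) = c * dist x y)
    {x y : X} (hx : x ∈ t) (hy : y ∈ t) :
    dist (invFunOn f s x) (invFunOn f s y) = c⁻¹ * dist x y := by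
  have h := hf _ (hst.mapsTo_invFunOn hx) _ (hst.mapsTo_invFunOn hy)
  rw [hst.rightInvOn_invFunOn hx, hst.rightInvOn_invFunOn hy] at h
  rw [h, inv_mul_cancel_left₀ hc]

end Branch

theorem Set.SurjOn.image_invFunOn_eq_inter_preimage {α β : Type*} [Nonempty α] {f : α → β}
    {s : Set α} {t : Set β} (hinj : InjOn f s) (hst : SurjOn f s t) :
    invFunOn f s '' t = s ∩ f ⁻¹' t := by
  ext x
  constructor
  · rintro ⟨y, hy, rfl⟩
    exact ⟨hst.mapsTo_invFunOn hy, by rwa [mem_preimage, hst.rightInvOn_invFunOn hy]⟩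
  · rintro ⟨hxs, hfx⟩
    exact ⟨f x, hfx, hinj.leftInvOn_invFunOn hxs⟩

section InvariantSet

variable {X ι : Type*} (f : X → X) (V : ι → Set X)

def invariantSet : Set X :=
  ⋃ α : ℕ → ι, ⋂ k : ℕ, f^[k] ⁻¹' V (α k)

variable {f V}

theorem mem_invariantSet {x : X} :
    x ∈ invariantSet f V ↔ ∃ α : ℕ → ι, ∀ k, f^[k] x ∈ V (α k) := by
  simp only [invariantSet, mem_iUnion, mem_iInter, mem_preimage]

theorem invariantSet_subset_iUnion : invariantSet f V ⊆ ⋃ i, V i := fun x hx ↦ by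
  obtain ⟨α, hα⟩ := mem_invariantSet.mp hx
  exact mem_iUnion.mpr ⟨α 0, hα 0⟩

theorem invariantSet_eq_iUnion_inter_preimage :
    invariantSet f V = ⋃ i, V i ∩ f ⁻¹' invariantSet f V := by
  ext x
  simp only [mem_iUnion, mem_inter_iff, mem_preimage, mem_invariantSet]
  constructor
  · rintro ⟨α, hα⟩
    refine ⟨α 0, hα 0, fun k ↦ α (k + 1), fun k ↦ ?_⟩
    simpa only [iterate_succ_apply] using hα (k + 1)
  · rintro ⟨i, hxi, α, hα⟩
    refine ⟨fun | 0 => i | k + 1 => α k, fun k ↦ ?_⟩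
    cases k with
    | zero => exact hxi
    | succ k => simpa only [iterate_succ_apply] using hα k

end InvariantSet

theorem stmt4_general {n m : ℕ}
    (V : Fin m → Set (EuclideanSpace ℝ (Fin n)))
    (hsep : ∀ i j, i ≠ j → ∃ ε > 0, ∀ x ∈ V i, ∀ y ∈ V j, ε ≤ dist x y)
    (f : EuclideanSpace ℝ (Fin n) → EuclideanSpace ℝ (Fin n))
    (hcover : ∀ i j, V j ⊆ f '' V i)
    (lam : Fin m → ℝ) (hlam : ∀ i, 1 < lam i)
    (hexp : ∀ i, ∀ x ∈ V i, ∀ y ∈ V i, dist (f x) (f y) = lam i * dist x y) :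
    ∃ S : Fin m → EuclideanSpace ℝ (Fin n) → EuclideanSpace ℝ (Fin n),
      (∀ i, ∀ x ∈ (⋃ α : ℕ → Fin m, ⋂ k : ℕ, (f^[k]) ⁻¹' (V (α k))),
          S i x ∈ V i ∧ f (S i x) = x) ∧
      (∀ i, ∀ x ∈ (⋃ α : ℕ → Fin m, ⋂ k : ℕ, (f^[k]) ⁻¹' (V (α k))),
          ∀ y ∈ (⋃ α : ℕ → Fin m, ⋂ k : ℕ, (f^[k]) ⁻¹' (V (α k))),
          dist (S i x) (S i y) = (lam i)⁻¹ * dist x y) ∧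
      (⋃ α : ℕ → Fin m, ⋂ k : ℕ, (f^[k]) ⁻¹' (V (α k)))
        = ⋃ i, S i '' (⋃ α : ℕ → Fin m, ⋂ k : ℕ, (f^[k]) ⁻¹' (V (α k))) ∧
      (∀ i j, i ≠ j →
        Disjoint (S i '' (⋃ α : ℕ → Fin m, ⋂ k : ℕ, (f^[k]) ⁻¹' (V (α k))))
                 (S j '' (⋃ α : ℕ → Fin m, ⋂ k : ℕ, (f^[k]) ⁻¹' (V (α k))))) := by
  rw [show (⋃ α : ℕ → Fin m, ⋂ k : ℕ, f^[k] ⁻¹' V (α k)) = invariantSet f V from rfl]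
  have hlam0 i : lam i ≠ 0 := (zero_lt_one.trans (hlam i)).ne'
  have hsurj i : SurjOn f (V i) (invariantSet f V) :=
    invariantSet_subset_iUnion.trans (iUnion_subset (hcover i))
  have himage i : invFunOn f (V i) '' invariantSet f V = V i ∩ f ⁻¹' invariantSet f V :=
    (hsurj i).image_invFunOn_eq_inter_preimage (InjOn.of_dist_eq_mul (hlam0 i) (hexp i))
  refine ⟨fun i ↦ invFunOn f (V i), fun i x hx ↦ ?_, fun i x hx y hy ↦ ?_, ?_, fun i j hij ↦ ?_⟩
  · exact ⟨(hsurj i).mapsTo_invFunOn hx, (hsurj i).rightInvOn_invFunOn hx⟩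
  · exact (hsurj i).dist_invFunOn_eq_inv_mul (hlam0 i) (hexp i) hx hy
  · simp only [himage]
    exact invariantSet_eq_iUnion_inter_preimage
  · obtain ⟨ε, hε, hεdist⟩ := hsep i j hij
    rw [himage, himage, Set.disjoint_left]
    rintro x ⟨hxi, -⟩ ⟨hxj, -⟩
    exact (hεdist x hxi x hxj).not_gt (by rwa [dist_self])

/-- the invariant set V of a strictly coupled-expanding map with
similarity expansion ratios λᵢ is self-similar: the branches Sᵢ = (f|_{Vᵢ})⁻¹|_V
are similarities of ratio 1/λᵢ mapping V into Vᵢ, V = ⋃ᵢ Sᵢ(V), and the pieces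
Sᵢ(V) are pairwise disjoint. -/
theorem stmt4 {n m : ℕ} (hm : 2 ≤ m)
    (D : Set (EuclideanSpace ℝ (Fin n))) (hDcl : IsClosed D)
    (hDb : Bornology.IsBounded D)
    (V : Fin m → Set (EuclideanSpace ℝ (Fin n)))
    (hVc : ∀ i, IsCompact (V i)) (hVD : ∀ i, V i ⊆ D)
    (hsep : ∀ i j, i ≠ j → ∃ ε > 0, ∀ x ∈ V i, ∀ y ∈ V j, ε ≤ dist x y)
    (f : EuclideanSpace ℝ (Fin n) → EuclideanSpace ℝ (Fin n))
    (hf : ContinuousOn f (⋃ i, V i))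
    (hcover : ∀ i j, V j ⊆ f '' V i)
    (lam : Fin m → ℝ) (hlam : ∀ i, 1 < lam i)
    (hexp : ∀ i, ∀ x ∈ V i, ∀ y ∈ V i, dist (f x) (f y) = lam i * dist x y) :
    ∃ S : Fin m → EuclideanSpace ℝ (Fin n) → EuclideanSpace ℝ (Fin n),
      (∀ i, ∀ x ∈ (⋃ α : ℕ → Fin m, ⋂ k : ℕ, (f^[k]) ⁻¹' (V (α k))),
          S i x ∈ V i ∧ f (S i x) = x) ∧
      (∀ i, ∀ x ∈ (⋃ α : ℕ → Fin m, ⋂ k : ℕ, (f^[k]) ⁻¹' (V (α k))),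
          ∀ y ∈ (⋃ α : ℕ → Fin m, ⋂ k : ℕ, (f^[k]) ⁻¹' (V (α k))),
          dist (S i x) (S i y) = (lam i)⁻¹ * dist x y) ∧
      (⋃ α : ℕ → Fin m, ⋂ k : ℕ, (f^[k]) ⁻¹' (V (α k)))
        = ⋃ i, S i '' (⋃ α : ℕ → Fin m, ⋂ k : ℕ, (f^[k]) ⁻¹' (V (α k))) ∧
      (∀ i j, i ≠ j →
        Disjoint (S i '' (⋃ α : ℕ → Fin m, ⋂ k : ℕ, (f^[k]) ⁻¹' (V (α k))))
                 (S j '' (⋃ α : ℕ → Fin m, ⋂ k : ℕ, (f^[k]) ⁻¹' (V (α k))))) :=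
  stmt4_general V hsep f hcover lam hlam hexp
end
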